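/- arXiv:2212.13282 — 2 statements merged into one kernel-verified Lean document; each statement's English description precedes it below -/
import Mathlib

section
/- Let u and v be smooth solutions of y'' + q·y = 0. Then for n = 4 and each k = 0,1,2,3, the function s_k = u^{3−k}·v^k satisfies the fourth-order equation y^{(4)} + 10·q·y'' + 10·q'·y' + 3·(3q² + q'')·y = 0. -/
private lemma iter4 (f : ℝ → ℝ) : iteratedDeriv 4 f = deriv (deriv (deriv (deriv f))) := by
  rw [show (4:ℕ) = 3+1 from rfl, iteratedDeriv_succ,
      show (3:ℕ) = 2+1 from rfl, iteratedDeriv_succ,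
      show (2:ℕ) = 1+1 from rfl, iteratedDeriv_succ, iteratedDeriv_one]

private lemma iter2 (f : ℝ → ℝ) : iteratedDeriv 2 f = deriv (deriv f) := by
  rw [show (2:ℕ) = 1+1 from rfl, iteratedDeriv_succ, iteratedDeriv_one]

private lemma cube_case (q u : ℝ → ℝ) (hq : ContDiff ℝ (⊤ : ℕ∞) q) (hu : ContDiff ℝ (⊤ : ℕ∞) u)
    (hu'' : ∀ x : ℝ, deriv (deriv u) x = -(q x * u x)) (x : ℝ) :
    deriv (deriv (deriv (deriv (fun t => u t * u t * u t)))) x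
      + 10 * q x * deriv (deriv (fun t => u t * u t * u t)) x
      + 10 * deriv q x * deriv (fun t => u t * u t * u t) x
      + 3 * (3 * (q x) ^ 2 + deriv (deriv q) x) * (u x * u x * u x) = 0 := by
  set P := deriv u with hP
  have du : ∀ t : ℝ, HasDerivAt u (P t) t := fun t => (hu.differentiable (by simp) t).hasDerivAt
  have dP : ∀ t : ℝ, HasDerivAt P (-(q t * u t)) t := by
    intro t
    have : DifferentiableAt ℝ P t :=
      ((contDiff_infty_iff_deriv.mp (hu.of_le (by simp))).2.differentiable (by simp)) t
    simpa [← hu'' t] using this.hasDerivAt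
  have dq : ∀ t : ℝ, HasDerivAt q (deriv q t) t := fun t => (hq.differentiable (by simp) t).hasDerivAt
  have dq' : ∀ t : ℝ, HasDerivAt (deriv q) (deriv (deriv q) t) t := by
    intro t
    have : DifferentiableAt ℝ (deriv q) t :=
      ((contDiff_infty_iff_deriv.mp (hq.of_le (by simp))).2.differentiable (by simp)) t
    exact this.hasDerivAt
  have e1 : deriv (fun t => u t * u t * u t) = fun t => 3 * u t * u t * P t := by
    funext t
    have h := ((du t).mul (du t)).mul (du t)
    erw [h.deriv]; simp only [Pi.mul_apply]; ring
  have e2 : deriv (fun t => 3 * u t * u t * P t)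
      = fun t => 6 * u t * P t * P t - 3 * q t * u t * u t * u t := by
    funext t
    have h := ((((du t).const_mul 3).mul (du t)).mul (dP t))
    erw [h.deriv]; simp only [Pi.mul_apply]; ring
  have e3 : deriv (fun t => 6 * u t * P t * P t - 3 * q t * u t * u t * u t)
      = fun t => 6 * P t * P t * P t - 21 * q t * u t * u t * P t
          - 3 * deriv q t * u t * u t * u t := by
    funext t
    have h := ((((du t).const_mul 6).mul (dP t)).mul (dP t)).sub
      (((((dq t).const_mul 3).mul (du t)).mul (du t)).mul (du t))
    erw [h.deriv]; simp only [Pi.mul_apply]; ring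
  have e4 : deriv (fun t => 6 * P t * P t * P t - 21 * q t * u t * u t * P t
      - 3 * deriv q t * u t * u t * u t) x
      = ((6 * (-(q x * u x)) * P x + 6 * P x * (-(q x * u x))) * P x
          + 6 * P x * P x * (-(q x * u x)))
        - ((((21 * deriv q x * u x + 21 * q x * P x) * u x + 21 * q x * u x * P x) * P x)
            + 21 * q x * u x * u x * (-(q x * u x)))
        - ((((3 * deriv (deriv q) x * u x + 3 * deriv q x * P x) * u x
            + 3 * deriv q x * u x * P x) * u x) + 3 * deriv q x * u x * u x * P x) := by
    have h := (((((dP x).const_mul 6).mul (dP x)).mul (dP x)).sub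
        (((((dq x).const_mul 21).mul (du x)).mul (du x)).mul (dP x))).sub
      (((((dq' x).const_mul 3).mul (du x)).mul (du x)).mul (du x))
    exact h.deriv
  rw [e1, e2, e3, e4]
  simp only
  ring

private lemma sql_case (q u v : ℝ → ℝ) (hq : ContDiff ℝ (⊤ : ℕ∞) q) (hu : ContDiff ℝ (⊤ : ℕ∞) u)
    (hv : ContDiff ℝ (⊤ : ℕ∞) v)
    (hu'' : ∀ x : ℝ, deriv (deriv u) x = -(q x * u x))
    (hv'' : ∀ x : ℝ, deriv (deriv v) x = -(q x * v x)) (x : ℝ) :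
    deriv (deriv (deriv (deriv (fun t => u t * u t * v t)))) x
      + 10 * q x * deriv (deriv (fun t => u t * u t * v t)) x
      + 10 * deriv q x * deriv (fun t => u t * u t * v t) x
      + 3 * (3 * (q x) ^ 2 + deriv (deriv q) x) * (u x * u x * v x) = 0 := by
  set P := deriv u with hP
  set Q := deriv v with hQ
  have du : ∀ t : ℝ, HasDerivAt u (P t) t := fun t => (hu.differentiable (by simp) t).hasDerivAt
  have dv : ∀ t : ℝ, HasDerivAt v (Q t) t := fun t => (hv.differentiable (by simp) t).hasDerivAt
  have dP : ∀ t : ℝ, HasDerivAt P (-(q t * u t)) t := by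
    intro t
    have : DifferentiableAt ℝ P t :=
      ((contDiff_infty_iff_deriv.mp (hu.of_le (by simp))).2.differentiable (by simp)) t
    simpa [← hu'' t] using this.hasDerivAt
  have dQ : ∀ t : ℝ, HasDerivAt Q (-(q t * v t)) t := by
    intro t
    have : DifferentiableAt ℝ Q t :=
      ((contDiff_infty_iff_deriv.mp (hv.of_le (by simp))).2.differentiable (by simp)) t
    simpa [← hv'' t] using this.hasDerivAt
  have dq : ∀ t : ℝ, HasDerivAt q (deriv q t) t := fun t => (hq.differentiable (by simp) t).hasDerivAt
  have dq' : ∀ t : ℝ, HasDerivAt (deriv q) (deriv (deriv q) t) t := by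
    intro t
    have : DifferentiableAt ℝ (deriv q) t :=
      ((contDiff_infty_iff_deriv.mp (hq.of_le (by simp))).2.differentiable (by simp)) t
    exact this.hasDerivAt
  have e1 : deriv (fun t => u t * u t * v t)
      = fun t => 2 * u t * P t * v t + u t * u t * Q t := by
    funext t
    have h := ((du t).mul (du t)).mul (dv t)
    erw [h.deriv]; simp only [Pi.mul_apply]; ring
  have e2 : deriv (fun t => 2 * u t * P t * v t + u t * u t * Q t)
      = fun t => 2 * P t * P t * v t + 4 * u t * P t * Q t - 3 * q t * u t * u t * v t := by
    funext t
    have h := ((((du t).const_mul 2).mul (dP t)).mul (dv t)).add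
      (((du t).mul (du t)).mul (dQ t))
    erw [h.deriv]; simp only [Pi.mul_apply]; ring
  have e3 : deriv (fun t => 2 * P t * P t * v t + 4 * u t * P t * Q t
      - 3 * q t * u t * u t * v t)
      = fun t => 6 * P t * P t * Q t - 14 * q t * u t * P t * v t
          - 7 * q t * u t * u t * Q t - 3 * deriv q t * u t * u t * v t := by
    funext t
    have h := (((((dP t).const_mul 2).mul (dP t)).mul (dv t)).add
        ((((du t).const_mul 4).mul (dP t)).mul (dQ t))).sub
      (((((dq t).const_mul 3).mul (du t)).mul (du t)).mul (dv t))
    erw [h.deriv]; simp only [Pi.mul_apply]; ring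
  have e4 : deriv (fun t => 6 * P t * P t * Q t - 14 * q t * u t * P t * v t
      - 7 * q t * u t * u t * Q t - 3 * deriv q t * u t * u t * v t) x
      = ((6 * (-(q x * u x)) * P x + 6 * P x * (-(q x * u x))) * Q x
          + 6 * P x * P x * (-(q x * v x)))
        - ((((14 * deriv q x * u x + 14 * q x * P x) * P x
            + 14 * q x * u x * (-(q x * u x))) * v x) + 14 * q x * u x * P x * Q x)
        - ((((7 * deriv q x * u x + 7 * q x * P x) * u x + 7 * q x * u x * P x) * Q x)
            + 7 * q x * u x * u x * (-(q x * v x)))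
        - ((((3 * deriv (deriv q) x * u x + 3 * deriv q x * P x) * u x
            + 3 * deriv q x * u x * P x) * v x) + 3 * deriv q x * u x * u x * Q x) := by
    have h := ((((((dP x).const_mul 6).mul (dP x)).mul (dQ x)).sub
        (((((dq x).const_mul 14).mul (du x)).mul (dP x)).mul (dv x))).sub
        (((((dq x).const_mul 7).mul (du x)).mul (du x)).mul (dQ x))).sub
      (((((dq' x).const_mul 3).mul (du x)).mul (du x)).mul (dv x))
    exact h.deriv
  rw [e1, e2, e3, e4]
  simp only
  ring


/-- If `u, v` solve `y'' + q·y = 0`, then for `n = 4` the functions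
`s_k = u^{3−k}·v^k` (`k = 0,1,2,3`) solve
`y⁗ + 10q·y'' + 10q'·y' + 3(3q² + q'')·y = 0`. -/
theorem sk_solve_fourth_order (q u v : ℝ → ℝ) (hq : ContDiff ℝ (⊤ : ℕ∞) q)
    (hu : ContDiff ℝ (⊤ : ℕ∞) u) (hv : ContDiff ℝ (⊤ : ℕ∞) v)
    (hu'' : ∀ x : ℝ, iteratedDeriv 2 u x = -(q x * u x))
    (hv'' : ∀ x : ℝ, iteratedDeriv 2 v x = -(q x * v x)) :
    ∀ k < 4, ∀ x : ℝ,
      iteratedDeriv 4 (fun t => u t ^ (3 - k) * v t ^ k) x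
        + 10 * q x * iteratedDeriv 2 (fun t => u t ^ (3 - k) * v t ^ k) x
        + 10 * deriv q x * deriv (fun t => u t ^ (3 - k) * v t ^ k) x
        + 3 * (3 * (q x) ^ 2 + iteratedDeriv 2 q x) * (u x ^ (3 - k) * v x ^ k) = 0 := by
  have hu2 : ∀ x : ℝ, deriv (deriv u) x = -(q x * u x) := by
    intro x; rw [← iter2 u]; exact hu'' x
  have hv2 : ∀ x : ℝ, deriv (deriv v) x = -(q x * v x) := by
    intro x; rw [← iter2 v]; exact hv'' x
  intro k hk x
  rw [iter4, iter2, iter2]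
  interval_cases k
  · have hf : (fun t => u t ^ (3 - 0) * v t ^ 0) = fun t => u t * u t * u t := by
      funext t; ring
    have hx : u x ^ (3 - 0) * v x ^ 0 = u x * u x * u x := by ring
    rw [hf, hx]; exact cube_case q u hq hu hu2 x
  · have hf : (fun t => u t ^ (3 - 1) * v t ^ 1) = fun t => u t * u t * v t := by
      funext t; ring
    have hx : u x ^ (3 - 1) * v x ^ 1 = u x * u x * v x := by ring
    rw [hf, hx]; exact sql_case q u v hq hu hv hu2 hv2 x
  · have hf : (fun t => u t ^ (3 - 2) * v t ^ 2) = fun t => v t * v t * u t := by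
      funext t; ring
    have hx : u x ^ (3 - 2) * v x ^ 2 = v x * v x * u x := by ring
    rw [hf, hx]; exact sql_case q v u hq hv hu hv2 hu2 x
  · have hf : (fun t => u t ^ (3 - 3) * v t ^ 3) = fun t => v t * v t * v t := by
      funext t; ring
    have hx : u x ^ (3 - 3) * v x ^ 3 = v x * v x * v x := by ring
    rw [hf, hx]; exact cube_case q v hq hv hv2 x
end

section
/- For the equation y^{(4)} = 0 with Lagrangian L₄ = (1/2)·(y'')², the expression F(x) = −2γ·(y')² + (3γ·y + (γx − β)·y')·y'' + (1/2)·(α + 2βx − γx²)·(y'')² + (3(β − γx)·y − (α + 2βx − γx²)·y')·y''' satisfies D_x F = (−α·y' + β·(3y − 2x·y') + γ·(−3x·y + x²·y'))·y^{(4)} for all smooth y and all constants α, β, γ. In particular, F is a first integral of y^{(4)} = 0. -/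
/-- The first integral of `y⁗ = 0` associated with the `sl₂` symmetry
`αF₄ + βG₄ + γH₄` with characteristic `Q = −αy' + β(3y − 2xy') + γ(−3xy + x²y')`. -/
theorem first_integral_sl2_fourth (α β γ : ℝ) (y : ℝ → ℝ) (hy : ContDiff ℝ (⊤ : ℕ∞) y) :
    (∀ x : ℝ, deriv (fun t => -2 * γ * (deriv y t) ^ 2
        + (3 * γ * y t + (γ * t - β) * deriv y t) * iteratedDeriv 2 y t
        + (1 / 2 : ℝ) * (α + 2 * β * t - γ * t ^ 2) * (iteratedDeriv 2 y t) ^ 2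
        + (3 * (β - γ * t) * y t - (α + 2 * β * t - γ * t ^ 2) * deriv y t)
            * iteratedDeriv 3 y t) x
      = (-α * deriv y x + β * (3 * y x - 2 * x * deriv y x)
          + γ * (-3 * x * y x + x ^ 2 * deriv y x)) * iteratedDeriv 4 y x) ∧
    ((∀ x : ℝ, iteratedDeriv 4 y x = 0) → ∃ c : ℝ, ∀ x : ℝ,
      -2 * γ * (deriv y x) ^ 2
        + (3 * γ * y x + (γ * x - β) * deriv y x) * iteratedDeriv 2 y x
        + (1 / 2 : ℝ) * (α + 2 * β * x - γ * x ^ 2) * (iteratedDeriv 2 y x) ^ 2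
        + (3 * (β - γ * x) * y x - (α + 2 * β * x - γ * x ^ 2) * deriv y x)
            * iteratedDeriv 3 y x = c) := by
  have hD : ∀ (n : ℕ) (x : ℝ), HasDerivAt (iteratedDeriv n y) (iteratedDeriv (n+1) y x) x := by
    intro n x
    rw [iteratedDeriv_succ]
    exact ((hy.differentiable_iteratedDeriv n
      (by exact_mod_cast lt_top_iff_ne_top.2 (by simp))) x).hasDerivAt
  have h0 : ∀ x : ℝ, HasDerivAt y (deriv y x) x := by
    intro x
    have := hD 0 x
    simpa [iteratedDeriv_zero, iteratedDeriv_one] using this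
  have h1 : ∀ x : ℝ, HasDerivAt (deriv y) (iteratedDeriv 2 y x) x := by
    intro x
    have := hD 1 x
    simpa [iteratedDeriv_one] using this
  have hF : ∀ x : ℝ, HasDerivAt (fun t => -2 * γ * (deriv y t) ^ 2
        + (3 * γ * y t + (γ * t - β) * deriv y t) * iteratedDeriv 2 y t
        + (1 / 2 : ℝ) * (α + 2 * β * t - γ * t ^ 2) * (iteratedDeriv 2 y t) ^ 2
        + (3 * (β - γ * t) * y t - (α + 2 * β * t - γ * t ^ 2) * deriv y t)
            * iteratedDeriv 3 y t)
      ((-α * deriv y x + β * (3 * y x - 2 * x * deriv y x)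
          + γ * (-3 * x * y x + x ^ 2 * deriv y x)) * iteratedDeriv 4 y x) x := by
    intro x
    have hp : HasDerivAt (fun t : ℝ => α + 2 * β * t - γ * t ^ 2) (2 * β - γ * (2 * x)) x := by
      have : HasDerivAt (fun t : ℝ => α + 2 * β * t - γ * t ^ 2)
          (0 + 2 * β * 1 - γ * (2 * x ^ 1 * 1)) x :=
        ((hasDerivAt_const x α).add (((hasDerivAt_id x).const_mul (2*β)))).sub
          (((hasDerivAt_id x).pow 2).const_mul γ)
      simpa using this
    have hq : HasDerivAt (fun t : ℝ => γ * t - β) γ x := by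
      simpa using (((hasDerivAt_id x).const_mul γ).sub_const β)
    have hr : HasDerivAt (fun t : ℝ => 3 * (β - γ * t)) (3 * (-γ)) x := by
      have : HasDerivAt (fun t : ℝ => β - γ * t) (0 - γ * 1) x :=
        (hasDerivAt_const x β).sub ((hasDerivAt_id x).const_mul γ)
      simpa using this.const_mul 3
    have hA := ((h1 x).pow 2).const_mul (-2 * γ)
    have hB := (((h0 x).const_mul (3*γ)).add (hq.mul (h1 x))).mul (hD 2 x)
    have hC := (hp.mul ((hD 2 x).pow 2)).const_mul (1/2 : ℝ)
    have hE := (((hr.mul (h0 x))).sub (hp.mul (h1 x))).mul (hD 3 x)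
    have := ((hA.add hB).add hC).add hE
    convert this using 1
    · rfl
    · rfl
    · funext t; simp only [Pi.add_apply, Pi.mul_apply, Pi.sub_apply, Pi.pow_apply]; ring
    have e2 : iteratedDeriv (1+1) y x = iteratedDeriv 2 y x := by norm_num
    have e3 : iteratedDeriv (2+1) y x = iteratedDeriv 3 y x := by norm_num
    have e4 : iteratedDeriv (3+1) y x = iteratedDeriv 4 y x := by norm_num
    rw [e2, e3, e4]
    simp only [Pi.add_apply, Pi.mul_apply, Pi.sub_apply, Pi.pow_apply]
    push_cast
    ring
  constructor
  · intro x
    exact (hF x).deriv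
  · intro h4
    refine ⟨-2 * γ * (deriv y 0) ^ 2
        + (3 * γ * y 0 + (γ * 0 - β) * deriv y 0) * iteratedDeriv 2 y 0
        + (1 / 2 : ℝ) * (α + 2 * β * 0 - γ * 0 ^ 2) * (iteratedDeriv 2 y 0) ^ 2
        + (3 * (β - γ * 0) * y 0 - (α + 2 * β * 0 - γ * 0 ^ 2) * deriv y 0)
            * iteratedDeriv 3 y 0, fun x => ?_⟩
    have hconst := is_const_of_deriv_eq_zero (f := fun t => -2 * γ * (deriv y t) ^ 2
        + (3 * γ * y t + (γ * t - β) * deriv y t) * iteratedDeriv 2 y t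
        + (1 / 2 : ℝ) * (α + 2 * β * t - γ * t ^ 2) * (iteratedDeriv 2 y t) ^ 2
        + (3 * (β - γ * t) * y t - (α + 2 * β * t - γ * t ^ 2) * deriv y t)
            * iteratedDeriv 3 y t)
      (fun t => (hF t).differentiableAt)
      (fun t => by rw [(hF t).deriv, h4 t, mul_zero]) x 0
    exact hconst
end
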